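/- arXiv:2602.13425 — 4 statements merged into one kernel-verified Lean document; each statement's English description precedes it below -/
import Mathlib

section
/- Let n ≥ 1, s ∈ (0,1), 0 < λ ≤ Λ, x₀ ∈ ℝⁿ, R > 0, and let u : ℝⁿ → ℝ be a continuous function with u⁻ ∈ L¹_s(ℝⁿ) and u ≥ 0 in the ball B_R(x₀). Let S be a set compactly contained in B_R(x₀) and set d₀ = dist(S, ∂B_R(x₀)) > 0. Then there exists a constant C̃ > 0, depending only on n, s, Λ, d₀ and sup_{x∈S}|x|, such that for every x ∈ S and every admissible kernel μ, the (well-defined, since the integrand is nonnegative) integral L_μ u⁻(x) = (1−s)∫_{ℝⁿ}(u⁻(x+y)+u⁻(x−y)−2u⁻(x)) μ(y/|y|) |y|^{−(n+2s)} dy satisfies L_μ u⁻(x) ≤ C̃ ‖u⁻‖_{L¹_s(ℝⁿ)}; consequently 𝓜⁺[u⁻](x) ≤ C̃ ‖u⁻‖_{L¹_s(ℝⁿ)} for all x ∈ S. -/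
open MeasureTheory Metric Set Filter RealInnerProductSpace

noncomputable section

/-- Euclidean space ℝⁿ. -/
abbrev Eu (n : ℕ) := EuclideanSpace ℝ (Fin n)

/-- A kernel `μ` in the class `𝓛_*`: measurable, with values in `[λ, Λ]` on the unit
sphere, and even. -/
def IsAdmissibleKernel (n : ℕ) (lam Lam : ℝ) (μ : Eu n → ℝ) : Prop :=
  Measurable μ ∧ (∀ θ : Eu n, ‖θ‖ = 1 → μ θ ∈ Set.Icc lam Lam) ∧ ∀ θ : Eu n, μ (-θ) = μ θ

/-- The integrand `(u(x+y) + u(x−y) − 2u(x)) μ(y/|y|) |y|^{−(n+2s)}`. -/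
def kernIntegrand (n : ℕ) (s : ℝ) (μ u : Eu n → ℝ) (x y : Eu n) : ℝ :=
  (u (x + y) + u (x - y) - 2 * u x) * μ (‖y‖⁻¹ • y) / ‖y‖ ^ ((n : ℝ) + 2 * s)

/-- The linear nonlocal operator `L_μ u(x)`. -/
def Lop (n : ℕ) (s : ℝ) (μ u : Eu n → ℝ) (x : Eu n) : ℝ :=
  (1 - s) * ∫ y, kernIntegrand n s μ u x y

/-- The Pucci extremal operator `𝓜⁺`. -/
def PucciSup (n : ℕ) (s lam Lam : ℝ) (u : Eu n → ℝ) (x : Eu n) : ℝ :=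
  ⨆ μ : {μ : Eu n → ℝ // IsAdmissibleKernel n lam Lam μ}, Lop n s μ.1 u x

/-- The Pucci extremal operator `𝓜⁻`. -/
def PucciInf (n : ℕ) (s lam Lam : ℝ) (u : Eu n → ℝ) (x : Eu n) : ℝ :=
  ⨅ μ : {μ : Eu n → ℝ // IsAdmissibleKernel n lam Lam μ}, Lop n s μ.1 u x

/-- Membership in `L¹_s(ℝⁿ)`. -/
def MemL1s (n : ℕ) (s : ℝ) (u : Eu n → ℝ) : Prop :=
  Integrable (fun x : Eu n => |u x| / (1 + ‖x‖ ^ ((n : ℝ) + 2 * s)))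

/-- The weighted norm `‖u‖_{L¹_s(ℝⁿ)}`. -/
def L1sNorm (n : ℕ) (s : ℝ) (u : Eu n → ℝ) : ℝ :=
  ∫ x : Eu n, |u x| / (1 + ‖x‖ ^ ((n : ℝ) + 2 * s))

/-- Viscosity supersolution `𝓜⁻[u] ≤ g` in `Ω` (the function `g` may incorporate
zeroth-order terms evaluated at `(x, u(x))`): every `C²` test function in `L¹_s`
touching `u` from below at a point of `Ω` satisfies `𝓜⁻[φ](x) ≤ g(x)`. -/
def ViscSupersol (n : ℕ) (s lam Lam : ℝ) (Ω : Set (Eu n)) (u g : Eu n → ℝ) : Prop :=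
  ∀ x ∈ Ω, ∀ φ : Eu n → ℝ, MemL1s n s φ → ContDiffAt ℝ 2 φ x →
    φ x = u x → (∀ y, φ y ≤ u y) → PucciInf n s lam Lam φ x ≤ g x

/-- Viscosity subsolution `𝓜⁻[u] ≥ g` in `Ω`. -/
def ViscSubsol (n : ℕ) (s lam Lam : ℝ) (Ω : Set (Eu n)) (u g : Eu n → ℝ) : Prop :=
  ∀ x ∈ Ω, ∀ φ : Eu n → ℝ, MemL1s n s φ → ContDiffAt ℝ 2 φ x →
    φ x = u x → (∀ y, u y ≤ φ y) → g x ≤ PucciInf n s lam Lam φ x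

/-!
For `x ∈ S` the ball `B_{d₀}(x)` lies in `B_R(x₀)`, where `u⁻` vanishes, so the integrand of
`L_μ u⁻(x)` lives on `|y| ≥ d₀`. There `|y|^{-(n+2s)} ≤ C (1 + |x ± y|^{n+2s})⁻¹` with
`C = d₀^{-(n+2s)} + (1 + M/d₀)^{n+2s}` and `M = sup_S |x|`, and after the changes of variables
`z = x ± y` the integral is at most `2ΛC ‖u⁻‖_{L¹_s}`.
-/

open scoped ENNReal

lemma exists_norm_eq_one_smul_eq {E : Type*} [NormedAddCommGroup E] [NormedSpace ℝ E]
    [Nontrivial E] (y : E) : ∃ v : E, ‖v‖ = 1 ∧ ‖y‖ • v = y := by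
  by_cases hy : y = 0
  · obtain ⟨v, hv⟩ := exists_norm_eq E zero_le_one
    exact ⟨v, hv, by simp [hy]⟩
  · exact ⟨‖y‖⁻¹ • y, norm_smul_inv_norm hy, smul_inv_smul₀ (norm_ne_zero_iff.2 hy) y⟩

lemma dist_add_le_of_forall_le_dist_sphere {E : Type*} [NormedAddCommGroup E]
    [NormedSpace ℝ E] [Nontrivial E] {x x₀ : E} {R d : ℝ} (hx : dist x x₀ ≤ R)
    (h : ∀ z ∈ sphere x₀ R, d ≤ dist x z) : dist x x₀ + d ≤ R := by
  obtain ⟨v, hv, hxv⟩ := exists_norm_eq_one_smul_eq (x - x₀)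
  have hR : 0 ≤ R := dist_nonneg.trans hx
  have hz : x₀ + R • v ∈ sphere x₀ R := by
    simp [norm_smul, hv, abs_of_nonneg hR]
  have hdist : dist x (x₀ + R • v) = R - dist x x₀ := by
    rw [dist_eq_norm, show x - (x₀ + R • v) = (‖x - x₀‖ - R) • v by rw [sub_smul, hxv]; abel,
      norm_smul, hv, mul_one, Real.norm_eq_abs, abs_of_nonpos (by rwa [← dist_eq_norm, sub_nonpos]),
      dist_eq_norm, neg_sub]
  linarith [h _ hz]

lemma ball_subset_ball_of_forall_le_dist_sphere {E : Type*} [NormedAddCommGroup E]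
    [NormedSpace ℝ E] [Nontrivial E] {x x₀ : E} {R d : ℝ} (hx : x ∈ ball x₀ R)
    (h : ∀ z ∈ sphere x₀ R, d ≤ dist x z) : ball x d ⊆ ball x₀ R :=
  ball_subset_ball' (by linarith [dist_add_le_of_forall_le_dist_sphere (mem_ball.1 hx).le h])

lemma ofReal_integral_le_lintegral_ofReal {α : Type*} [MeasurableSpace α] {ν : Measure α}
    (f : α → ℝ) : ENNReal.ofReal (∫ a, f a ∂ν) ≤ ∫⁻ a, ENNReal.ofReal (f a) ∂ν := by
  by_cases hf : Integrable f ν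
  · rw [integral_eq_lintegral_pos_part_sub_lintegral_neg_part hf]
    refine (ENNReal.ofReal_le_ofReal (sub_le_self _ ENNReal.toReal_nonneg)).trans ?_
    exact ENNReal.ofReal_toReal_le
  · simp [integral_undef hf]

theorem lintegral_add_left_add_sub_left {G : Type*} [AddGroup G] [MeasurableSpace G]
    [MeasurableAdd G] [MeasurableNeg G] {ν : Measure G} [ν.IsAddLeftInvariant] [ν.IsNegInvariant]
    {f : G → ℝ≥0∞} (hf : AEMeasurable f ν) (x : G) :
    ∫⁻ y, (f (x + y) + f (x - y)) ∂ν = 2 * ∫⁻ y, f y ∂ν := by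
  have hfx : AEMeasurable (fun y => f (x + y)) ν :=
    hf.comp_quasiMeasurePreserving (measurePreserving_add_left ν x).quasiMeasurePreserving
  rw [lintegral_add_left' hfx, lintegral_add_left_eq_self, lintegral_sub_left_eq_self, two_mul]

def weightConst (p d M : ℝ) : ℝ := d ^ (-p) + (1 + M / d) ^ p

lemma weightConst_pos {p d M : ℝ} (hd : 0 < d) (hM : 0 ≤ M) : 0 < weightConst p d M := by
  unfold weightConst
  have := Real.rpow_pos_of_pos hd (-p)
  positivity

lemma one_add_norm_add_rpow_le {E : Type*} [SeminormedAddCommGroup E] {x y : E} {p d M : ℝ}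
    (hp : 0 ≤ p) (hd : 0 < d) (hx : ‖x‖ ≤ M) (hy : d ≤ ‖y‖) :
    1 + ‖x + y‖ ^ p ≤ weightConst p d M * ‖y‖ ^ p := by
  have hM : 0 ≤ M := (norm_nonneg x).trans hx
  have hxy : ‖x + y‖ ≤ ‖y‖ * (1 + M / d) := calc
    ‖x + y‖ ≤ M + ‖y‖ := (norm_add_le x y).trans (by linarith)
    _ ≤ M / d * ‖y‖ + ‖y‖ := by
      gcongr; rw [div_mul_eq_mul_div, le_div_iff₀ hd]; gcongr
    _ = ‖y‖ * (1 + M / d) := by ring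
  have hone : 1 ≤ d ^ (-p) * ‖y‖ ^ p := calc
    (1 : ℝ) = d ^ (-p) * d ^ p := by rw [← Real.rpow_add hd, neg_add_cancel, Real.rpow_zero]
    _ ≤ d ^ (-p) * ‖y‖ ^ p := by gcongr
  calc 1 + ‖x + y‖ ^ p ≤ d ^ (-p) * ‖y‖ ^ p + (‖y‖ * (1 + M / d)) ^ p := by gcongr
    _ = weightConst p d M * ‖y‖ ^ p := by
      rw [Real.mul_rpow (norm_nonneg y) (by positivity), weightConst]; ring

def l1sDensity (n : ℕ) (s : ℝ) (w : Eu n → ℝ) (z : Eu n) : ℝ :=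
  |w z| / (1 + ‖z‖ ^ ((n : ℝ) + 2 * s))

section KernelBounds

variable {n : ℕ} {s lam Lam d M : ℝ} {μ w : Eu n → ℝ} {x : Eu n}

lemma l1sDensity_nonneg (z : Eu n) : 0 ≤ l1sDensity n s w z := by
  unfold l1sDensity; positivity

lemma div_norm_rpow_le_weightConst_mul_l1sDensity (hs : 0 ≤ s) (hd : 0 < d) (hx : ‖x‖ ≤ M)
    (hw : ∀ z, 0 ≤ w z) {y : Eu n} (hy : d ≤ ‖y‖) :
    w (x + y) / ‖y‖ ^ ((n : ℝ) + 2 * s) ≤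
      weightConst ((n : ℝ) + 2 * s) d M * l1sDensity n s w (x + y) := by
  have hp : 0 ≤ (n : ℝ) + 2 * s := by positivity
  have hy0 : 0 < ‖y‖ ^ ((n : ℝ) + 2 * s) := Real.rpow_pos_of_pos (hd.trans_le hy) _
  rw [l1sDensity, abs_of_nonneg (hw _), mul_div_assoc', div_le_div_iff₀ hy0 (by positivity)]
  calc w (x + y) * (1 + ‖x + y‖ ^ ((n : ℝ) + 2 * s))
      ≤ w (x + y) * (weightConst ((n : ℝ) + 2 * s) d M * ‖y‖ ^ ((n : ℝ) + 2 * s)) :=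
        mul_le_mul_of_nonneg_left (one_add_norm_add_rpow_le hp hd hx hy) (hw _)
    _ = _ := by ring

lemma kernIntegrand_le (hs : 0 ≤ s) (hLam : 0 ≤ Lam) (hμ : IsAdmissibleKernel n lam Lam μ)
    (hd : 0 < d) (hx : ‖x‖ ≤ M) (hw : ∀ z, 0 ≤ w z) (hw0 : ∀ z ∈ ball x d, w z = 0) (y : Eu n) :
    kernIntegrand n s μ w x y ≤ Lam * weightConst ((n : ℝ) + 2 * s) d M *
      (l1sDensity n s w (x + y) + l1sDensity n s w (x - y)) := by
  have hM : 0 ≤ M := (norm_nonneg x).trans hx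
  have hK : 0 ≤ Lam * weightConst ((n : ℝ) + 2 * s) d M *
      (l1sDensity n s w (x + y) + l1sDensity n s w (x - y)) := by
    have := weightConst_pos (p := (n : ℝ) + 2 * s) hd hM
    have := l1sDensity_nonneg (s := s) (w := w) (x + y)
    have := l1sDensity_nonneg (s := s) (w := w) (x - y)
    positivity
  simp only [kernIntegrand, hw0 x (mem_ball_self hd), mul_zero, sub_zero]
  rcases lt_or_ge ‖y‖ d with hy | hy
  · rwa [hw0 (x + y) (by simpa using hy), hw0 (x - y) (by simpa using hy), add_zero, zero_mul,
      zero_div]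
  have hμy : μ (‖y‖⁻¹ • y) ≤ Lam :=
    (hμ.2.1 _ (norm_smul_inv_norm (norm_pos_iff.1 (hd.trans_le hy)))).2
  have hplus := div_norm_rpow_le_weightConst_mul_l1sDensity hs hd hx hw hy
  have hminus := div_norm_rpow_le_weightConst_mul_l1sDensity hs hd hx hw (y := -y) (by simpa)
  rw [norm_neg, ← sub_eq_add_neg] at hminus
  have := hw (x + y); have := hw (x - y)
  calc (w (x + y) + w (x - y)) * μ (‖y‖⁻¹ • y) / ‖y‖ ^ ((n : ℝ) + 2 * s)
      ≤ (w (x + y) + w (x - y)) * Lam / ‖y‖ ^ ((n : ℝ) + 2 * s) := by gcongr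
    _ = Lam * (w (x + y) / ‖y‖ ^ ((n : ℝ) + 2 * s) + w (x - y) / ‖y‖ ^ ((n : ℝ) + 2 * s)) := by
      ring
    _ ≤ Lam * (weightConst ((n : ℝ) + 2 * s) d M * l1sDensity n s w (x + y) +
          weightConst ((n : ℝ) + 2 * s) d M * l1sDensity n s w (x - y)) := by gcongr
    _ = _ := by ring

lemma lintegral_ofReal_kernIntegrand_le (hs : 0 ≤ s) (hLam : 0 ≤ Lam)
    (hμ : IsAdmissibleKernel n lam Lam μ) (hd : 0 < d) (hx : ‖x‖ ≤ M) (hw : ∀ z, 0 ≤ w z)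
    (hw0 : ∀ z ∈ ball x d, w z = 0) (hwL1 : MemL1s n s w) :
    ∫⁻ y, ENNReal.ofReal (kernIntegrand n s μ w x y) ≤
      ENNReal.ofReal (2 * (Lam * weightConst ((n : ℝ) + 2 * s) d M) * L1sNorm n s w) := by
  set K := Lam * weightConst ((n : ℝ) + 2 * s) d M
  have hg : Integrable (l1sDensity n s w) := hwL1
  have hK : 0 ≤ K := mul_nonneg hLam (weightConst_pos hd ((norm_nonneg x).trans hx)).le
  calc ∫⁻ y, ENNReal.ofReal (kernIntegrand n s μ w x y)
      ≤ ∫⁻ y, ENNReal.ofReal K * (ENNReal.ofReal (l1sDensity n s w (x + y)) +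
          ENNReal.ofReal (l1sDensity n s w (x - y))) := by
        refine lintegral_mono fun y => ?_
        rw [← ENNReal.ofReal_add (l1sDensity_nonneg _) (l1sDensity_nonneg _),
          ← ENNReal.ofReal_mul hK]
        exact ENNReal.ofReal_le_ofReal (kernIntegrand_le hs hLam hμ hd hx hw hw0 y)
    _ = ENNReal.ofReal K * (2 * ∫⁻ z, ENNReal.ofReal (l1sDensity n s w z)) := by
        rw [lintegral_const_mul' _ _ ENNReal.ofReal_ne_top,
          lintegral_add_left_add_sub_left hg.aemeasurable.ennreal_ofReal]
    _ = ENNReal.ofReal (2 * K * L1sNorm n s w) := by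
        rw [← ofReal_integral_eq_lintegral_ofReal hg (ae_of_all _ l1sDensity_nonneg),
          ENNReal.ofReal_mul (mul_nonneg zero_le_two hK), ENNReal.ofReal_mul zero_le_two,
          ENNReal.ofReal_ofNat, show L1sNorm n s w = ∫ z, l1sDensity n s w z from rfl]
        ring

lemma Lop_le_of_lintegral_le (hs : s ≤ 1) {B : ℝ} (hB : 0 ≤ B)
    (h : ENNReal.ofReal (1 - s) * ∫⁻ y, ENNReal.ofReal (kernIntegrand n s μ w x y) ≤
      ENNReal.ofReal B) : Lop n s μ w x ≤ B := by
  refine (ENNReal.ofReal_le_ofReal_iff hB).1 (le_trans ?_ h)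
  rw [Lop, ENNReal.ofReal_mul (by linarith)]
  gcongr
  exact ofReal_integral_le_lintegral_ofReal _

end KernelBounds

theorem stmt4_general (n : ℕ) (hn : 1 ≤ n) (s lam Lam : ℝ) (hs : s ∈ Set.Ioo (0:ℝ) 1)
    (hlam : 0 < lam) (hlamLam : lam ≤ Lam)
    (x₀ : Eu n) (R : ℝ)
    (u : Eu n → ℝ)
    (huL1 : MemL1s n s (fun z => max (-u z) 0))
    (hnonneg : ∀ x ∈ Metric.ball x₀ R, 0 ≤ u x)
    (S : Set (Eu n)) (hS : S ⊆ Metric.ball x₀ R)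
    (hScomp : IsCompact (closure S))
    (d₀ : ℝ) (hd₀pos : 0 < d₀)
    (hd₀ : ∀ x ∈ S, ∀ z ∈ Metric.sphere x₀ R, d₀ ≤ dist x z) :
    ∃ Ct > 0, ∀ x ∈ S,
      (∀ μ : Eu n → ℝ, IsAdmissibleKernel n lam Lam μ →
        ENNReal.ofReal (1 - s) *
            ∫⁻ y, ENNReal.ofReal (kernIntegrand n s μ (fun z => max (-u z) 0) x y) ≤
          ENNReal.ofReal (Ct * L1sNorm n s (fun z => max (-u z) 0))) ∧
      PucciSup n s lam Lam (fun z => max (-u z) 0) x ≤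
        Ct * L1sNorm n s (fun z => max (-u z) 0) := by
  -- makes `Eu n` nontrivial, so that the sphere `∂B_R(x₀)` is nonempty
  have : Nonempty (Fin n) := ⟨⟨0, hn⟩⟩
  obtain ⟨M, hM, hSM⟩ := (hScomp.isBounded.subset subset_closure).exists_pos_norm_le
  have hLam : 0 < Lam := hlam.trans_le hlamLam
  have hC := weightConst_pos (p := (n : ℝ) + 2 * s) hd₀pos hM.le
  set w : Eu n → ℝ := fun z => max (-u z) 0
  have hN : 0 ≤ L1sNorm n s w := integral_nonneg fun _ => l1sDensity_nonneg _
  refine ⟨2 * (Lam * weightConst ((n : ℝ) + 2 * s) d₀ M), by positivity, fun x hx => ?_⟩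
  have hw0 : ∀ z ∈ ball x d₀, w z = 0 := fun z hz => max_eq_right <| neg_nonpos.2 <|
    hnonneg z (ball_subset_ball_of_forall_le_dist_sphere (hS hx) (hd₀ x hx) hz)
  have hbound : ∀ μ, IsAdmissibleKernel n lam Lam μ →
      ENNReal.ofReal (1 - s) * ∫⁻ y, ENNReal.ofReal (kernIntegrand n s μ w x y) ≤
        ENNReal.ofReal (2 * (Lam * weightConst ((n : ℝ) + 2 * s) d₀ M) * L1sNorm n s w) :=
    fun μ hμ => calc
      _ ≤ 1 * ∫⁻ y, ENNReal.ofReal (kernIntegrand n s μ w x y) := by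
        gcongr; exact ENNReal.ofReal_le_one.2 (by linarith [hs.1])
      _ ≤ _ := (one_mul _).trans_le <| lintegral_ofReal_kernIntegrand_le hs.1.le hLam.le hμ
        hd₀pos (hSM x hx) (fun z => le_max_right _ _) hw0 huL1
  exact ⟨hbound, Real.iSup_le (fun μ => Lop_le_of_lintegral_le hs.2.le (by positivity)
    (hbound μ.1 μ.2)) (by positivity)⟩

/-- Proposition 3.1: if `u ≥ 0` in `B_R(x₀)` and `S ⋐ B_R(x₀)` with
`d₀ = dist(S, ∂B_R(x₀)) > 0`, then `L_μ u⁻(x) ≤ C̃ ‖u⁻‖_{L¹_s}` for every `x ∈ S` and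
every admissible kernel `μ` (the integral has nonnegative integrand, so it is taken in
`[0,∞]`); consequently `𝓜⁺[u⁻](x) ≤ C̃ ‖u⁻‖_{L¹_s}` on `S`. -/
theorem stmt4 (n : ℕ) (hn : 1 ≤ n) (s lam Lam : ℝ) (hs : s ∈ Set.Ioo (0:ℝ) 1)
    (hlam : 0 < lam) (hlamLam : lam ≤ Lam)
    (x₀ : Eu n) (R : ℝ) (hR : 0 < R)
    (u : Eu n → ℝ) (hu : Continuous u)
    (huL1 : MemL1s n s (fun z => max (-u z) 0))
    (hnonneg : ∀ x ∈ Metric.ball x₀ R, 0 ≤ u x)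
    (S : Set (Eu n)) (hS : S ⊆ Metric.ball x₀ R)
    (hScomp : IsCompact (closure S)) (hScl : closure S ⊆ Metric.ball x₀ R)
    (d₀ : ℝ) (hd₀pos : 0 < d₀)
    (hd₀ : ∀ x ∈ S, ∀ z ∈ Metric.sphere x₀ R, d₀ ≤ dist x z) :
    ∃ Ct > 0, ∀ x ∈ S,
      (∀ μ : Eu n → ℝ, IsAdmissibleKernel n lam Lam μ →
        ENNReal.ofReal (1 - s) *
            ∫⁻ y, ENNReal.ofReal (kernIntegrand n s μ (fun z => max (-u z) 0) x y) ≤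
          ENNReal.ofReal (Ct * L1sNorm n s (fun z => max (-u z) 0))) ∧
      PucciSup n s lam Lam (fun z => max (-u z) 0) x ≤
        Ct * L1sNorm n s (fun z => max (-u z) 0) :=
  stmt4_general n hn s lam Lam hs hlam hlamLam x₀ R u huL1 hnonneg S hS hScomp d₀ hd₀pos hd₀
end
end

section
/- (Strong maximum principle) Let n ≥ 1, s ∈ (0,1), 0 < λ ≤ Λ, let Ω ⊂ ℝⁿ be an open connected set, and let V ∈ L¹_loc(Ω) with V⁻ ∈ L^∞(Ω). Let u ∈ L¹_s(ℝⁿ) be lower semicontinuous on ℝⁿ with u ≥ 0 in all of ℝⁿ, and suppose 𝓜⁻[u] + V u ≤ 0 in Ω in the viscosity sense. Then either u > 0 everywhere in Ω or u ≡ 0 in Ω. -/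
open MeasureTheory Metric Set Filter RealInnerProductSpace

noncomputable section

/-!
If `u(x₀) = 0` for some `x₀ ∈ Ω`, the zeroth-order term vanishes at `x₀`, so every smooth `φ ≤ u`
touching `u` at `x₀` has `𝓜⁻[φ](x₀) ≤ 0`. If moreover `u(z) > 0`, lower semicontinuity fits a
smooth bump `0 ≤ φ ≤ u` around `z`, supported away from `x₀`. As `φ(x₀) = 0`, the integrand of every
`L_μ φ(x₀)` is at least `λ φ(x₀ + y) |y|^{-(n+2s)} ≥ 0`, so `𝓜⁻[φ](x₀) > 0`, a contradiction.
-/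

open scoped ContDiff

section BallKernel

lemma dist_sub_le_norm_of_add_mem_closedBall {E : Type*} [SeminormedAddGroup E] {x y z : E}
    {r : ℝ} (h : x + y ∈ closedBall z r) : dist x z - r ≤ ‖y‖ := by
  have := dist_triangle x (x + y) z
  rw [dist_self_add_right] at this
  linarith [mem_closedBall.1 h]

variable {E : Type*} [NormedAddCommGroup E] [MeasurableSpace E] [OpensMeasurableSpace E]
  {ν : Measure E} {φ : E → ℝ} {x z : E} {r p : ℝ}

lemma integrable_div_rpow_norm [ProperSpace E] [IsFiniteMeasureOnCompacts ν] (hφ : Continuous φ)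
    (hsupp : Function.support φ ⊆ closedBall z r) (hxz : r < dist x z) (hp : 0 ≤ p) :
    Integrable (fun y => φ (x + y) / ‖y‖ ^ p) ν := by
  obtain ⟨C, hC⟩ := hφ.bounded_above_of_compact_support
    (.of_support_subset_isCompact (isCompact_closedBall z r) hsupp)
  have hρ : 0 < dist x z - r := sub_pos.2 hxz
  have hsupp' : Function.support (fun y => φ (x + y) / ‖y‖ ^ p) ⊆ closedBall (z - x) r := by
    intro y hy
    have := hsupp (div_ne_zero_iff.1 hy).1
    rwa [mem_closedBall, dist_eq_norm, sub_sub_eq_add_sub, add_comm y, ← dist_eq_norm]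
  refine (integrableOn_iff_integrable_of_support_subset hsupp').1 <|
    Measure.integrableOn_of_bounded (M := C / (dist x z - r) ^ p) measure_closedBall_lt_top.ne
      ((hφ.comp (continuous_const_add x)).measurable.div
        (measurable_norm.pow_const p)).aestronglyMeasurable (ae_of_all _ fun y => ?_)
  by_cases hy : φ (x + y) = 0
  · simp only [hy, zero_div, norm_zero]
    exact div_nonneg ((norm_nonneg _).trans (hC x)) (Real.rpow_nonneg hρ.le p)
  · have hyρ := dist_sub_le_norm_of_add_mem_closedBall (hsupp hy)
    rw [norm_div, Real.norm_of_nonneg (Real.rpow_nonneg (norm_nonneg y) p)]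
    exact div_le_div₀ ((norm_nonneg _).trans (hC x)) (hC _) (Real.rpow_pos_of_pos hρ p)
      (Real.rpow_le_rpow hρ.le hyρ hp)

lemma integral_div_rpow_norm_pos [ProperSpace E] [IsFiniteMeasureOnCompacts ν]
    [ν.IsOpenPosMeasure] (hφ : Continuous φ) (hφ0 : 0 ≤ φ) (hz : 0 < φ z)
    (hsupp : Function.support φ ⊆ closedBall z r) (hxz : r < dist x z) (hp : 0 ≤ p) :
    0 < ∫ y, φ (x + y) / ‖y‖ ^ p ∂ν := by
  refine (integral_pos_iff_support_of_nonneg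
    (fun y => div_nonneg (hφ0 _) (Real.rpow_nonneg (norm_nonneg y) p))
    (integrable_div_rpow_norm hφ hsupp hxz hp)).2 ?_
  have hopen : IsOpen (Function.support fun y => φ (x + y)) :=
    (hφ.comp (continuous_const_add x)).isOpen_support
  refine (hopen.measure_pos ν ⟨z - x, by simp [hz.ne']⟩).trans_le (measure_mono fun y hy => ?_)
  have hyρ := dist_sub_le_norm_of_add_mem_closedBall (hsupp hy)
  exact div_ne_zero hy (Real.rpow_pos_of_pos (by linarith) p).ne'

end BallKernel

lemma exists_contDiff_le_of_lowerSemicontinuous {E : Type*} [NormedAddCommGroup E]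
    [NormedSpace ℝ E] [HasContDiffBump E] {u : E → ℝ} (hu : LowerSemicontinuous u) (hu0 : 0 ≤ u)
    {z : E} (hz : 0 < u z) {R : ℝ} (hR : 0 < R) :
    ∃ φ : E → ℝ, ContDiff ℝ ∞ φ ∧ 0 ≤ φ ∧ φ ≤ u ∧ 0 < φ z ∧
      Function.support φ ⊆ closedBall z R := by
  obtain ⟨r₀, hr₀, hball⟩ :=
    Metric.eventually_nhds_iff.1 (hu z (u z / 2) (half_lt_self hz))
  let bump : ContDiffBump z := ⟨min R r₀ / 2, min R r₀, by positivity, half_lt_self (by positivity)⟩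
  refine ⟨fun y => u z / 2 * bump y, contDiff_const.mul bump.contDiff,
    fun y => mul_nonneg (by positivity) bump.nonneg, fun y => ?_, ?_, ?_⟩
  · by_cases hy : y ∈ ball z (min R r₀)
    · have := hball (lt_of_lt_of_le (mem_ball.1 hy) (min_le_right _ _))
      nlinarith [bump.le_one (x := y)]
    · rw [← bump.support_eq, Function.notMem_support] at hy
      simpa [hy] using hu0 y
  · simp [bump.one_of_mem_closedBall (mem_closedBall_self (by positivity)), hz]
  · refine (Function.support_mul_subset_right _ _).trans ?_
    rw [bump.support_eq]
    exact ball_subset_closedBall.trans (closedBall_subset_closedBall (min_le_left _ _))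

section Pucci

variable {n : ℕ} {s lam Lam : ℝ}

lemma IsAdmissibleKernel.const (h : lam ≤ Lam) : IsAdmissibleKernel n lam Lam fun _ => lam :=
  ⟨measurable_const, fun _ _ => ⟨le_rfl, h⟩, fun _ => rfl⟩

lemma IsAdmissibleKernel.mem_Icc {μ : Eu n → ℝ} (hμ : IsAdmissibleKernel n lam Lam μ) {y : Eu n}
    (hy : y ≠ 0) : μ (‖y‖⁻¹ • y) ∈ Icc lam Lam :=
  hμ.2.1 _ (by rw [norm_smul, norm_inv, norm_norm, inv_mul_cancel₀ (norm_ne_zero_iff.2 hy)])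

lemma memL1s_of_integrable {φ : Eu n → ℝ} (hφ : Integrable φ) : MemL1s n s φ := by
  refine hφ.abs.mono' (hφ.aemeasurable.abs.div (by fun_prop)).aestronglyMeasurable
    (ae_of_all _ fun y => ?_)
  have hden : 1 ≤ 1 + ‖y‖ ^ ((n : ℝ) + 2 * s) := le_add_of_nonneg_right (by positivity)
  rw [Real.norm_of_nonneg (by positivity)]
  exact div_le_self (abs_nonneg _) hden

variable {μ φ : Eu n → ℝ} {x : Eu n}

lemma kernIntegrand_eq_of_apply_eq_zero (hx : φ x = 0) (y : Eu n) :
    kernIntegrand n s μ φ x y = (φ (x + y) / ‖y‖ ^ ((n : ℝ) + 2 * s)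
      + φ (x + -y) / ‖-y‖ ^ ((n : ℝ) + 2 * s)) * μ (‖y‖⁻¹ • y) := by
  simp only [kernIntegrand, hx, norm_neg, ← sub_eq_add_neg]
  ring

lemma lam_mul_le_kernIntegrand (hμ : IsAdmissibleKernel n lam Lam μ) (hlam : 0 ≤ lam)
    (hφ0 : 0 ≤ φ) (hx : φ x = 0) (y : Eu n) :
    lam * (φ (x + y) / ‖y‖ ^ ((n : ℝ) + 2 * s)) ≤ kernIntegrand n s μ φ x y := by
  rcases eq_or_ne y 0 with rfl | hy
  · simp [kernIntegrand, hx]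
  have hμy := hμ.mem_Icc hy
  have h₁ : 0 ≤ φ (x + y) / ‖y‖ ^ ((n : ℝ) + 2 * s) := div_nonneg (hφ0 _) (by positivity)
  have h₂ : 0 ≤ φ (x + -y) / ‖-y‖ ^ ((n : ℝ) + 2 * s) := div_nonneg (hφ0 _) (by positivity)
  rw [kernIntegrand_eq_of_apply_eq_zero hx]
  nlinarith [hμy.1]

lemma norm_kernIntegrand_le (hμ : IsAdmissibleKernel n lam Lam μ) (hlam : 0 ≤ lam)
    (hφ0 : 0 ≤ φ) (hx : φ x = 0) (y : Eu n) :
    ‖kernIntegrand n s μ φ x y‖ ≤ Lam * (φ (x + y) / ‖y‖ ^ ((n : ℝ) + 2 * s)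
      + φ (x + -y) / ‖-y‖ ^ ((n : ℝ) + 2 * s)) := by
  rcases eq_or_ne y 0 with rfl | hy
  · simp [kernIntegrand, hx]
  have hμy := hμ.mem_Icc hy
  have h₁ : 0 ≤ φ (x + y) / ‖y‖ ^ ((n : ℝ) + 2 * s) := div_nonneg (hφ0 _) (by positivity)
  have h₂ : 0 ≤ φ (x + -y) / ‖-y‖ ^ ((n : ℝ) + 2 * s) := div_nonneg (hφ0 _) (by positivity)
  rw [kernIntegrand_eq_of_apply_eq_zero hx, Real.norm_of_nonneg (by nlinarith [hμy.1]),
    mul_comm Lam]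
  exact mul_le_mul_of_nonneg_left hμy.2 (add_nonneg h₁ h₂)

variable {z : Eu n} {r : ℝ}

lemma mul_integral_le_Lop (hμ : IsAdmissibleKernel n lam Lam μ) (hs : s ∈ Icc (0 : ℝ) 1)
    (hlam : 0 ≤ lam) (hφ : Continuous φ) (hφ0 : 0 ≤ φ)
    (hsupp : Function.support φ ⊆ closedBall z r) (hxz : r < dist x z) :
    (1 - s) * (lam * ∫ y, φ (x + y) / ‖y‖ ^ ((n : ℝ) + 2 * s)) ≤ Lop n s μ φ x := by
  have hp : (0 : ℝ) ≤ n + 2 * s := by linarith [hs.1, Nat.cast_nonneg (α := ℝ) n]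
  have hx : φ x = 0 := Function.notMem_support.1 fun h => (mem_closedBall.1 (hsupp h)).not_gt hxz
  have hg := integrable_div_rpow_norm (ν := volume) hφ hsupp hxz hp
  have hI : Integrable (kernIntegrand n s μ φ x) := by
    refine ((hg.add hg.comp_neg).const_mul Lam).mono' ?_
      (ae_of_all _ (norm_kernIntegrand_le hμ hlam hφ0 hx))
    rw [funext (kernIntegrand_eq_of_apply_eq_zero hx)]
    exact (hg.add hg.comp_neg).aestronglyMeasurable.mul
      (hμ.1.comp (by fun_prop)).aestronglyMeasurable
  rw [Lop, ← integral_const_mul]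
  exact mul_le_mul_of_nonneg_left (integral_mono (hg.const_mul lam) hI
    (lam_mul_le_kernIntegrand hμ hlam hφ0 hx)) (sub_nonneg.2 hs.2)

lemma PucciInf_pos (hs : s ∈ Ioo (0 : ℝ) 1) (hlam : 0 < lam) (hlamLam : lam ≤ Lam)
    (hφ : Continuous φ) (hφ0 : 0 ≤ φ) (hz : 0 < φ z)
    (hsupp : Function.support φ ⊆ closedBall z r) (hxz : r < dist x z) :
    0 < PucciInf n s lam Lam φ x := by
  have : Nonempty {μ : Eu n → ℝ // IsAdmissibleKernel n lam Lam μ} :=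
    ⟨⟨_, IsAdmissibleKernel.const hlamLam⟩⟩
  have hp : (0 : ℝ) ≤ n + 2 * s := by linarith [hs.1, Nat.cast_nonneg (α := ℝ) n]
  have hpos : 0 < (1 - s) * (lam * ∫ y, φ (x + y) / ‖y‖ ^ ((n : ℝ) + 2 * s)) :=
    mul_pos (sub_pos.2 hs.2) (mul_pos hlam (integral_div_rpow_norm_pos hφ hφ0 hz hsupp hxz hp))
  exact hpos.trans_le <| le_ciInf fun μ =>
    mul_integral_le_Lop μ.2 (Ioo_subset_Icc_self hs) hlam.le hφ hφ0 hsupp hxz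

lemma ViscSupersol.eq_zero_of_apply_eq_zero {Ω : Set (Eu n)} {u g : Eu n → ℝ}
    (hsuper : ViscSupersol n s lam Lam Ω u g) (hs : s ∈ Ioo (0 : ℝ) 1) (hlam : 0 < lam)
    (hlamLam : lam ≤ Lam) (hu : LowerSemicontinuous u) (hu0 : 0 ≤ u) {x₀ : Eu n} (hx₀ : x₀ ∈ Ω)
    (hux₀ : u x₀ = 0) (hg : g x₀ ≤ 0) (z : Eu n) : u z = 0 := by
  by_contra hne
  have hz : 0 < u z := (hu0 z).lt_of_ne' hne
  have hd : 0 < dist x₀ z := dist_pos.2 fun h => hne (h ▸ hux₀)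
  obtain ⟨φ, hφC, hφ0, hφu, hφz, hsupp⟩ :=
    exists_contDiff_le_of_lowerSemicontinuous hu hu0 hz (half_pos hd)
  have hxz : dist x₀ z / 2 < dist x₀ z := half_lt_self hd
  have hφx₀ : φ x₀ = 0 :=
    Function.notMem_support.1 fun h => (mem_closedBall.1 (hsupp h)).not_gt hxz
  have hle := hsuper x₀ hx₀ φ
    (memL1s_of_integrable (hφC.continuous.integrable_of_hasCompactSupport
      (.of_support_subset_isCompact (isCompact_closedBall z _) hsupp)))
    (hφC.contDiffAt.of_le (WithTop.coe_le_coe.2 le_top)) (hφx₀.trans hux₀.symm) hφu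
  exact (PucciInf_pos hs hlam hlamLam hφC.continuous hφ0 hφz hsupp hxz).not_ge (hle.trans hg)

end Pucci

theorem stmt6_general (n : ℕ) (s lam Lam : ℝ) (hs : s ∈ Set.Ioo (0:ℝ) 1)
    (hlam : 0 < lam) (hlamLam : lam ≤ Lam)
    (Ω : Set (Eu n))
    (V : Eu n → ℝ)
    (u : Eu n → ℝ) (hlsc : LowerSemicontinuous u)
    (hnonneg : ∀ x : Eu n, 0 ≤ u x)
    (hsuper : ViscSupersol n s lam Lam Ω u (fun x => -(V x * u x))) :
    (∀ x ∈ Ω, 0 < u x) ∨ (∀ x ∈ Ω, u x = 0) := by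
  refine or_iff_not_imp_left.2 fun hpos => ?_
  obtain ⟨x₀, hx₀, hux₀⟩ : ∃ x₀ ∈ Ω, u x₀ = 0 := by
    by_contra! h
    exact hpos fun x hx => (hnonneg x).lt_of_ne (h x hx).symm
  exact fun z _ =>
    hsuper.eq_zero_of_apply_eq_zero hs hlam hlamLam hlsc hnonneg hx₀ hux₀ (by simp [hux₀]) z

/-- Proposition 3.3 (Strong Maximum Principle): a nonnegative lower semicontinuous
viscosity supersolution of `𝓜⁻[u] + Vu ≤ 0` in a connected open set `Ω` is either
positive everywhere in `Ω` or identically zero in `Ω`. -/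
theorem stmt6 (n : ℕ) (hn : 1 ≤ n) (s lam Lam : ℝ) (hs : s ∈ Set.Ioo (0:ℝ) 1)
    (hlam : 0 < lam) (hlamLam : lam ≤ Lam)
    (Ω : Set (Eu n)) (hΩo : IsOpen Ω) (hΩconn : IsConnected Ω)
    (V : Eu n → ℝ) (hVloc : ∀ K ⊆ Ω, IsCompact K → IntegrableOn V K)
    (hVminus : ∃ K : ℝ, ∀ x ∈ Ω, max (-V x) 0 ≤ K)
    (u : Eu n → ℝ) (hlsc : LowerSemicontinuous u) (huL1 : MemL1s n s u)
    (hnonneg : ∀ x : Eu n, 0 ≤ u x)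
    (hsuper : ViscSupersol n s lam Lam Ω u (fun x => -(V x * u x))) :
    (∀ x ∈ Ω, 0 < u x) ∨ (∀ x ∈ Ω, u x = 0) :=
  stmt6_general n s lam Lam hs hlam hlamLam Ω V u hlsc hnonneg hsuper
end
end

section
/- Let n ≥ 1, s ∈ (0,1), 0 < λ ≤ Λ, let Ω ⊂ ℝⁿ be a bounded open set with C^{1,1} boundary, let q > 0, a ∈ C(Ω̄), and let u ∈ C(ℝⁿ) ∩ L¹_s(ℝⁿ) be a nontrivial viscosity solution of 𝓜⁻[u] + a(x)u^q = 0 in Ω with u ≥ 0 in Ω and u ≤ 0 in ℝⁿ∖Ω. Then every point x₀ ∈ Ω̄ at which u attains its maximum over Ω̄ satisfies x₀ ∈ Ω and a(x₀) > 0, i.e. x₀ ∈ Ω_a⁺ = {x ∈ Ω : a(x) > 0}. -/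
open MeasureTheory Metric Set Filter RealInnerProductSpace

noncomputable section

/-- `C^{1,1}` boundary of a bounded open set, characterized by a uniform two-sided
(interior and exterior) ball condition, with `ν` the outward unit normal. -/
def HasC11Boundary (n : ℕ) (Ω : Set (Eu n)) : Prop :=
  ∃ r > 0, ∀ x ∈ frontier Ω, ∃ ν : Eu n, ‖ν‖ = 1 ∧
    Metric.ball (x - r • ν) r ⊆ Ω ∧ Metric.ball (x + r • ν) r ⊆ (closure Ω)ᶜ

/-!
Since `u ≥ 0` is nontrivial in `Ω` and `u ≤ 0` outside, its maximum `M` over `Ω̄` is positive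
and attained only inside `Ω`. A smooth compactly supported plateau `φ` with `φ = M` on `Ω` and
`0 ≤ φ ≤ M` everywhere touches `u` from above at `x₀`. Every second difference
`φ(x₀ + y) + φ(x₀ - y) - 2φ(x₀)` is `≤ 0`, and it equals `-2M` for large `|y|`, so
`𝓜⁻[φ](x₀) < 0`. The subsolution inequality `-a(x₀) M^q ≤ 𝓜⁻[φ](x₀)` then forces `a(x₀) > 0`.
-/

open scoped NNReal

section SecondDifference

variable {E : Type*} [NormedAddCommGroup E] [NormedSpace ℝ E]

theorem abs_secondDifference_le_of_lipschitzWith_fderiv {φ : E → ℝ}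
    (hφ : Differentiable ℝ φ) {K : ℝ≥0} (hK : LipschitzWith K (fderiv ℝ φ)) (x y : E) :
    |φ (x + y) + φ (x - y) - 2 * φ x| ≤ 2 * K * ‖y‖ ^ 2 := by
  let G : ℝ → ℝ := fun t => φ (x + t • y) + φ (x - t • y)
  have hG (t : ℝ) :
      HasDerivAt G (fderiv ℝ φ (x + t • y) y - fderiv ℝ φ (x - t • y) y) t := by
    have hl : HasDerivAt (fun t : ℝ => t • y) y t := by
      simpa using (hasDerivAt_id t).smul_const y
    have := ((hφ _).hasFDerivAt.comp_hasDerivAt t (hl.const_add x)).add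
      ((hφ _).hasFDerivAt.comp_hasDerivAt t (hl.const_sub x))
    simp only [map_neg, ← sub_eq_add_neg] at this
    exact this
  have hG' : ∀ t ∈ Ico (0 : ℝ) 1,
      ‖fderiv ℝ φ (x + t • y) y - fderiv ℝ φ (x - t • y) y‖ ≤ 2 * K * ‖y‖ ^ 2 := by
    rintro t ⟨ht0, ht1⟩
    have hdist : ‖(x + t • y) - (x - t • y)‖ ≤ 2 * ‖y‖ := by
      rw [add_sub_sub_cancel, ← two_smul ℝ, smul_smul, norm_smul,
        Real.norm_of_nonneg (by positivity)]
      nlinarith [norm_nonneg y]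
    calc ‖fderiv ℝ φ (x + t • y) y - fderiv ℝ φ (x - t • y) y‖
        ≤ ‖fderiv ℝ φ (x + t • y) - fderiv ℝ φ (x - t • y)‖ * ‖y‖ :=
          (fderiv ℝ φ (x + t • y) - fderiv ℝ φ (x - t • y)).le_opNorm y
      _ ≤ K * (2 * ‖y‖) * ‖y‖ := by
          gcongr
          exact (hK.norm_sub_le _ _).trans (by gcongr)
      _ = 2 * K * ‖y‖ ^ 2 := by ring
  have := norm_image_sub_le_of_norm_deriv_le_segment_01'
    (fun t _ => (hG t).hasDerivWithinAt) hG'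
  simpa [G, two_mul, add_sub_add_comm] using this

end SecondDifference

section Integrability

variable {E : Type*} [NormedAddCommGroup E] [NormedSpace ℝ E] [FiniteDimensional ℝ E]
  [MeasurableSpace E] [BorelSpace E] {μ : Measure E} [μ.IsAddHaarMeasure]

theorem integrable_div_norm_rpow_of_abs_le (hd : 1 ≤ Module.finrank ℝ E) {f : E → ℝ}
    (hf : AEStronglyMeasurable f μ) {B C p : ℝ} (hp : Module.finrank ℝ E < p)
    (hp₂ : p < Module.finrank ℝ E + 2) (hB : ∀ y, |f y| ≤ B) (hC : ∀ y, |f y| ≤ C * ‖y‖ ^ 2) :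
    Integrable (fun y => f y / ‖y‖ ^ p) μ := by
  have hp₀ : 0 < p := lt_of_le_of_lt (Nat.cast_nonneg _) hp
  have hmeas : AEStronglyMeasurable (fun y => f y / ‖y‖ ^ p) μ :=
    hf.div₀ (by fun_prop : Measurable fun y : E => ‖y‖ ^ p).aestronglyMeasurable
  rw [← integrableOn_univ, ← union_compl_self (ball (0 : E) 1)]
  refine IntegrableOn.union ?_ ?_
  · refine integrableOn_ball_of_norm_le_rpow hd (C := |C|) (α := p - 2) (by linarith)
      (ae_of_all _ fun y => ?_) hmeas
    rcases eq_or_ne y 0 with rfl | hy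
    · have hf0 : f 0 = 0 := abs_nonpos_iff.1 (by simpa using hC 0)
      simp only [hf0, zero_div, norm_zero]
      positivity
    · have hy' : 0 < ‖y‖ := norm_pos_iff.2 hy
      rw [Real.norm_eq_abs, abs_div, abs_of_pos (Real.rpow_pos_of_pos hy' p),
        Real.rpow_neg hy'.le, Real.rpow_sub hy', Real.rpow_two, div_le_iff₀ (by positivity)]
      calc |f y| ≤ C * ‖y‖ ^ 2 := hC y
        _ ≤ |C| * ‖y‖ ^ 2 := by gcongr; exact le_abs_self C
        _ = _ := by field_simp
  · have hmaj : Integrable (fun y : E => (2 ^ p * B) * (1 + ‖y‖) ^ (-p)) μ :=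
      (integrable_one_add_norm hp).const_mul _
    refine hmaj.integrableOn.mono' hmeas.restrict ?_
    filter_upwards [ae_restrict_mem measurableSet_ball.compl] with y hy
    have hy1 : 1 ≤ ‖y‖ := by simpa using hy
    have hy' : 0 < ‖y‖ := one_pos.trans_le hy1
    rw [Real.norm_eq_abs, abs_div, abs_of_pos (Real.rpow_pos_of_pos hy' p),
      Real.rpow_neg (by positivity), ← div_eq_mul_inv,
      div_le_div_iff₀ (by positivity) (by positivity)]
    have hB0 : 0 ≤ B := (abs_nonneg _).trans (hB 0)
    calc |f y| * (1 + ‖y‖) ^ p ≤ B * (2 * ‖y‖) ^ p := by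
          gcongr
          · exact hB y
          · linarith
      _ = 2 ^ p * B * ‖y‖ ^ p := by rw [Real.mul_rpow (by norm_num) hy'.le]; ring

end Integrability

section Kernel

variable {n : ℕ} {s lam Lam : ℝ} {μ φ : Eu n → ℝ} {x : Eu n}

theorem kernIntegrand_eq_mul (y : Eu n) :
    kernIntegrand n s μ φ x y = μ (‖y‖⁻¹ • y) * kernIntegrand n s 1 φ x y := by
  simp only [kernIntegrand, Pi.one_apply]
  ring

theorem kernIntegrand_one :
    kernIntegrand n s 1 φ x =
      fun y => (φ (x + y) + φ (x - y) - 2 * φ x) / ‖y‖ ^ ((n : ℝ) + 2 * s) := by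
  ext y
  simp [kernIntegrand]

theorem kernIntegrand_one_nonpos (hmax : ∀ y, φ y ≤ φ x) (y : Eu n) :
    kernIntegrand n s 1 φ x y ≤ 0 := by
  rw [kernIntegrand_one]
  exact div_nonpos_of_nonpos_of_nonneg (by linarith [hmax (x + y), hmax (x - y)])
    (by positivity)

theorem kernIntegrand_mem_Icc (hlam : 0 ≤ lam) (hμ : IsAdmissibleKernel n lam Lam μ)
    (hmax : ∀ y, φ y ≤ φ x) (y : Eu n) :
    kernIntegrand n s μ φ x y ∈ Icc (Lam * kernIntegrand n s 1 φ x y) 0 := by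
  rw [kernIntegrand_eq_mul (μ := μ)]
  have hg := kernIntegrand_one_nonpos (s := s) hmax y
  rcases eq_or_ne y 0 with rfl | hy
  · have hg0 : kernIntegrand n s 1 φ x 0 = 0 := by
      simp only [kernIntegrand_one, add_zero, sub_zero]
      ring
    simp [hg0]
  · have hθ : ‖‖y‖⁻¹ • y‖ = 1 := by
      rw [norm_smul, norm_inv, norm_norm, inv_mul_cancel₀ (norm_ne_zero_iff.2 hy)]
    obtain ⟨hlow, hup⟩ := hμ.2.1 _ hθ
    constructor <;> nlinarith

theorem integrable_kernIntegrand (hlam : 0 ≤ lam) (hμ : IsAdmissibleKernel n lam Lam μ)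
    (hmax : ∀ y, φ y ≤ φ x) (hg : Integrable (kernIntegrand n s 1 φ x)) :
    Integrable (kernIntegrand n s μ φ x) := by
  refine (hg.const_mul (-Lam)).mono' ?_ (ae_of_all _ fun y => ?_)
  · rw [funext (kernIntegrand_eq_mul (μ := μ))]
    exact ((hμ.1.comp (by fun_prop)).aestronglyMeasurable).mul hg.aestronglyMeasurable
  · obtain ⟨hlow, hup⟩ := kernIntegrand_mem_Icc hlam hμ hmax y
    rw [Real.norm_eq_abs, abs_of_nonpos hup]
    linarith

theorem lop_const (c : ℝ) :
    Lop n s (fun _ => c) φ x = (1 - s) * (c * ∫ y, kernIntegrand n s 1 φ x y) := by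
  simp only [Lop, kernIntegrand_eq_mul (μ := fun _ => c), integral_const_mul]

theorem pucciInf_neg_of_integral_neg (hs : s < 1) (hlam : 0 < lam) (hlamLam : lam ≤ Lam)
    (hmax : ∀ y, φ y ≤ φ x) (hg : Integrable (kernIntegrand n s 1 φ x))
    (hneg : ∫ y, kernIntegrand n s 1 φ x y < 0) :
    PucciInf n s lam Lam φ x < 0 := by
  have hconst : IsAdmissibleKernel n lam Lam (fun _ => lam) :=
    ⟨measurable_const, fun _ _ => ⟨le_rfl, hlamLam⟩, fun _ => rfl⟩
  -- without a lower bound the real `⨅` would be the junk value `0`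
  have hbdd : BddBelow (range fun μ : {μ // IsAdmissibleKernel n lam Lam μ} =>
      Lop n s μ.1 φ x) := by
    refine ⟨(1 - s) * (Lam * ∫ y, kernIntegrand n s 1 φ x y), ?_⟩
    rintro _ ⟨⟨μ, hμ⟩, rfl⟩
    rw [← integral_const_mul]
    exact mul_le_mul_of_nonneg_left (integral_mono (hg.const_mul Lam)
      (integrable_kernIntegrand hlam.le hμ hmax hg)
      fun y => (kernIntegrand_mem_Icc hlam.le hμ hmax y).1) (by linarith)
  calc PucciInf n s lam Lam φ x ≤ Lop n s (fun _ => lam) φ x := ciInf_le hbdd ⟨_, hconst⟩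
    _ = (1 - s) * (lam * ∫ y, kernIntegrand n s 1 φ x y) := lop_const lam
    _ < 0 := mul_neg_of_pos_of_neg (by linarith) (mul_neg_of_pos_of_neg hlam hneg)

theorem integral_kernIntegrand_one_neg (hmax : ∀ y, φ y ≤ φ x)
    (hg : Integrable (kernIntegrand n s 1 φ x)) {U : Set (Eu n)} (hU : IsOpen U)
    (hUne : U.Nonempty) (hlt : ∀ y ∈ U, φ (x + y) < φ x) :
    ∫ y, kernIntegrand n s 1 φ x y < 0 := by
  suffices 0 < ∫ y, -kernIntegrand n s 1 φ x y by rwa [integral_neg, neg_pos] at this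
  refine (integral_pos_iff_support_of_nonneg (fun y => ?_) hg.neg).2
    ((hU.measure_pos volume hUne).trans_le (measure_mono fun y hy => ?_))
  · simpa using kernIntegrand_one_nonpos hmax y
  · have hy0 : y ≠ 0 := by rintro rfl; simpa using hlt 0 hy
    have hnum : φ (x + y) + φ (x - y) - 2 * φ x < 0 := by
      linarith [hlt y hy, hmax (x - y)]
    simp only [Function.mem_support, Pi.neg_apply, kernIntegrand_one, neg_ne_zero]
    exact (div_neg_of_neg_of_pos hnum (by positivity)).ne

theorem integrable_kernIntegrand_one (hn : 1 ≤ n) (hs : s ∈ Ioo (0 : ℝ) 1)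
    (hφ : ContDiff ℝ 2 φ) (hφc : HasCompactSupport φ) (x : Eu n) :
    Integrable (kernIntegrand n s 1 φ x) := by
  obtain ⟨K, hK⟩ := ContDiff.lipschitzWith_of_hasCompactSupport (hφc.fderiv ℝ)
    (hφ.fderiv_right (m := 1) (by norm_num)) one_ne_zero
  obtain ⟨B, hB⟩ := hφ.continuous.bounded_above_of_compact_support hφc
  have hφcont := hφ.continuous
  have hD : Continuous fun y => φ (x + y) + φ (x - y) - 2 * φ x := by fun_prop
  have hbound (y : Eu n) : |φ (x + y) + φ (x - y) - 2 * φ x| ≤ 4 * B := by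
    have h₁ := abs_le.1 (hB (x + y))
    have h₂ := abs_le.1 (hB (x - y))
    have h₃ := abs_le.1 (hB x)
    exact abs_le.2 ⟨by linarith, by linarith⟩
  have hdim : (Module.finrank ℝ (Eu n) : ℝ) = n := by rw [finrank_euclideanSpace_fin]
  rw [kernIntegrand_one]
  exact integrable_div_norm_rpow_of_abs_le (p := n + 2 * s)
    (by rw [finrank_euclideanSpace_fin]; exact hn) hD.aestronglyMeasurable
    (by rw [hdim]; linarith [hs.1]) (by rw [hdim]; linarith [hs.2]) hbound
    (abs_secondDifference_le_of_lipschitzWith_fderiv (hφ.differentiable two_ne_zero) hK x)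

theorem pucciInf_neg_of_forall_le (hn : 1 ≤ n) (hs : s ∈ Ioo (0 : ℝ) 1) (hlam : 0 < lam)
    (hlamLam : lam ≤ Lam) (hφ : ContDiff ℝ 2 φ) (hφc : HasCompactSupport φ)
    (hmax : ∀ y, φ y ≤ φ x) (hpos : 0 < φ x) :
    PucciInf n s lam Lam φ x < 0 := by
  have : Nontrivial (Eu n) := by
    have : Nonempty (Fin n) := ⟨⟨0, hn⟩⟩
    infer_instance
  have hg := integrable_kernIntegrand_one hn hs hφ hφc x
  obtain ⟨r, hr⟩ := hφc.isCompact.isBounded.subset_closedBall 0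
  have hfar : ∀ y ∈ (closedBall (0 : Eu n) (r + ‖x‖))ᶜ, φ (x + y) < φ x := by
    intro y hy
    have hxy : x + y ∉ tsupport φ := fun h => by
      have h₁ := mem_closedBall_zero_iff.1 (hr h)
      have h₂ : r + ‖x‖ < ‖y‖ := by simpa using hy
      have h₃ : ‖y‖ ≤ ‖x + y‖ + ‖x‖ := by simpa using norm_sub_le (x + y) x
      linarith
    rwa [image_eq_zero_of_notMem_tsupport hxy]
  obtain ⟨y, hy⟩ := NormedSpace.exists_lt_norm ℝ (Eu n) (r + ‖x‖)
  exact pucciInf_neg_of_integral_neg hs.2 hlam hlamLam hmax hg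
    (integral_kernIntegrand_one_neg hmax hg isClosed_closedBall.isOpen_compl
      ⟨y, by simpa using hy⟩ hfar)

theorem memL1s_of_hasCompactSupport (hφ : Continuous φ) (hφc : HasCompactSupport φ) :
    MemL1s n s φ := by
  have hmeas := hφ.measurable
  refine (hφ.integrable_of_hasCompactSupport hφc).abs.mono'
    (by fun_prop : Measurable _).aestronglyMeasurable (ae_of_all _ fun y => ?_)
  rw [Real.norm_of_nonneg (by positivity)]
  exact div_le_self (abs_nonneg _) (le_add_of_nonneg_right (by positivity))

end Kernel

theorem Bornology.IsBounded.exists_contDiff_plateau {E : Type*} [NormedAddCommGroup E]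
    [InnerProductSpace ℝ E] [FiniteDimensional ℝ E] {Ω : Set E} (hΩ : IsBounded Ω) {M : ℝ}
    (hM : 0 ≤ M) :
    ∃ φ : E → ℝ, ContDiff ℝ 2 φ ∧ HasCompactSupport φ ∧ EqOn φ (fun _ => M) Ω ∧
      ∀ y, φ y ∈ Icc 0 M := by
  obtain ⟨R, hR⟩ := hΩ.subset_closedBall 0
  let f : ContDiffBump (0 : E) := ⟨max R 1, max R 1 + 1, by positivity, by linarith⟩
  refine ⟨fun y => M * f y, contDiff_const.mul f.contDiff, f.hasCompactSupport.mul_left,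
    fun y hy => ?_, fun y => ⟨mul_nonneg hM f.nonneg, mul_le_of_le_one_right hM f.le_one⟩⟩
  simp [f.one_of_mem_closedBall (closedBall_subset_closedBall (le_max_left R 1) (hR hy))]

theorem stmt9_general (n : ℕ) (hn : 1 ≤ n) (s lam Lam q : ℝ) (hs : s ∈ Set.Ioo (0:ℝ) 1)
    (hlam : 0 < lam) (hlamLam : lam ≤ Lam)
    (Ω : Set (Eu n)) (hΩb : Bornology.IsBounded Ω)
    (a : Eu n → ℝ)
    (u : Eu n → ℝ)
    (hsub : ViscSubsol n s lam Lam Ω u (fun x => -(a x * u x ^ q)))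
    (hnonneg : ∀ x ∈ Ω, 0 ≤ u x) (hext : ∀ x ∉ Ω, u x ≤ 0)
    (hnontriv : ∃ x ∈ Ω, u x ≠ 0) :
    ∀ x₀ ∈ closure Ω, (∀ y ∈ closure Ω, u y ≤ u x₀) → x₀ ∈ Ω ∧ 0 < a x₀ := by
  intro x₀ hx₀ hmax
  obtain ⟨x₁, hx₁, hux₁⟩ := hnontriv
  have hM : 0 < u x₀ :=
    ((hnonneg x₁ hx₁).lt_of_ne' hux₁).trans_le (hmax x₁ (subset_closure hx₁))
  have hx₀Ω : x₀ ∈ Ω := by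
    by_contra h
    linarith [hext x₀ h]
  obtain ⟨φ, hφ, hφc, hφΩ, hφM⟩ := hΩb.exists_contDiff_plateau hM.le
  have hφx₀ : φ x₀ = u x₀ := hφΩ hx₀Ω
  have hφu (y : Eu n) : u y ≤ φ y := by
    by_cases hy : y ∈ Ω
    · rw [hφΩ hy]
      exact hmax y (subset_closure hy)
    · exact (hext y hy).trans (hφM y).1
  have hP := pucciInf_neg_of_forall_le hn hs hlam hlamLam hφ hφc
    (fun y => hφx₀ ▸ (hφM y).2) (hφx₀ ▸ hM)
  have hvisc := hsub x₀ hx₀Ω φ (memL1s_of_hasCompactSupport hφ.continuous hφc) hφ.contDiffAt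
    hφx₀ hφu
  exact ⟨hx₀Ω, pos_of_mul_pos_left (by linarith) (Real.rpow_nonneg hM.le q)⟩

/-- Lemma 4.1 (localizing lemma): a nontrivial nonnegative solution of
`𝓜⁻[u] + a(x)u^q = 0` in `Ω` with `u ≤ 0` outside `Ω` can attain its maximum over `Ω̄`
only at interior points where the weight is positive. -/
theorem stmt9 (n : ℕ) (hn : 1 ≤ n) (s lam Lam q : ℝ) (hs : s ∈ Set.Ioo (0:ℝ) 1)
    (hlam : 0 < lam) (hlamLam : lam ≤ Lam) (hq : 0 < q)
    (Ω : Set (Eu n)) (hΩo : IsOpen Ω) (hΩb : Bornology.IsBounded Ω)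
    (hΩ11 : HasC11Boundary n Ω)
    (a : Eu n → ℝ) (ha : ContinuousOn a (closure Ω))
    (u : Eu n → ℝ) (hu : Continuous u) (huL1 : MemL1s n s u)
    (hsub : ViscSubsol n s lam Lam Ω u (fun x => -(a x * u x ^ q)))
    (hsuper : ViscSupersol n s lam Lam Ω u (fun x => -(a x * u x ^ q)))
    (hnonneg : ∀ x ∈ Ω, 0 ≤ u x) (hext : ∀ x ∉ Ω, u x ≤ 0)
    (hnontriv : ∃ x ∈ Ω, u x ≠ 0) :
    ∀ x₀ ∈ closure Ω, (∀ y ∈ closure Ω, u y ≤ u x₀) → x₀ ∈ Ω ∧ 0 < a x₀ :=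
  stmt9_general n hn s lam Lam q hs hlam hlamLam Ω hΩb a u hsub hnonneg hext hnontriv
end
end

section
/- Let n ≥ 1 and s ∈ (0,1), and let B_r denote the open ball of radius r centered at the origin in ℝⁿ. Let v : ℝⁿ → ℝ be measurable with ∫_{ℝⁿ}|v(y)|/(1+|y|^{n+2s}) dy < ∞, and suppose there exists x* ∈ B_{1/2} such that v(y) ≤ v(x*) for almost every y ∈ ℝⁿ, v(x*) ≥ 1, and v = 0 almost everywhere on B₃∖B₂. Then the integral ∫_{ℝⁿ}(v(y) − v(x*)) |y − x*|^{−(n+2s)} dy (well defined in [−∞, 0] since the integrand is nonpositive a.e.) satisfies ∫_{ℝⁿ}(v(y) − v(x*)) |y − x*|^{−(n+2s)} dy ≤ ∫_{B₃∖B₂}(v(y) − v(x*)) |y − x*|^{−(n+2s)} dy < 0. -/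
open MeasureTheory Metric Set Filter RealInnerProductSpace

noncomputable section

theorem MeasureTheory.setLIntegral_pos_of_ae_pos {α : Type*} [MeasurableSpace α] {μ : Measure α}
    {s : Set α} {f : α → ENNReal} (hs : MeasurableSet s) (hf : AEMeasurable f (μ.restrict s))
    (hμs : 0 < μ s) (hpos : ∀ᵐ x ∂μ, x ∈ s → 0 < f x) : 0 < ∫⁻ x in s, f x ∂μ := by
  refine pos_iff_ne_zero.2 fun hzero => hμs.ne' ?_
  rw [setLIntegral_eq_zero_iff' hs hf] at hzero
  rw [measure_eq_zero_iff_ae_notMem]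
  filter_upwards [hzero, hpos] with x hx_zero hx_pos hxs
  exact (hx_pos hxs).ne' (hx_zero hxs)

theorem Metric.measure_ball_diff_ball_pos {E : Type*} [NormedAddCommGroup E] [NormedSpace ℝ E]
    [Nontrivial E] [MeasurableSpace E] (μ : Measure E) [μ.IsOpenPosMeasure] (x : E) {r R : ℝ}
    (hr : 0 ≤ r) (hrR : r < R) : 0 < μ (ball x R \ ball x r) := by
  obtain ⟨z, hz⟩ := exists_norm_eq E (c := (r + R) / 2) (by linarith)
  have hmem : x + z ∈ ball x R \ closedBall x r := by
    simp only [Set.mem_sdiff, mem_ball, mem_closedBall, dist_self_add_left, hz, not_le]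
    constructor <;> linarith
  exact ((isOpen_ball.sdiff isClosed_closedBall).measure_pos μ ⟨x + z, hmem⟩).trans_le
    (measure_mono (sdiff_subset_sdiff_right ball_subset_closedBall))

/-- The paper's integrals of the a.e. nonpositive `v − v(x*)` are stated through the
nonnegative integrand `v(x*) − v`, as lower Lebesgue integrals. -/
theorem stmt19_general (n : ℕ) (hn : 1 ≤ n) (s : ℝ)
    (v : Eu n → ℝ) (hvmeas : Measurable v)
    (xs : Eu n) (hxs : xs ∈ Metric.ball (0 : Eu n) (1/2))
    (hone : 1 ≤ v xs)
    (hzero : ∀ᵐ y : Eu n, y ∈ Metric.ball (0 : Eu n) 3 \ Metric.ball (0 : Eu n) 2 → v y = 0) :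
    (∫⁻ y in Metric.ball (0 : Eu n) 3 \ Metric.ball (0 : Eu n) 2,
        ENNReal.ofReal ((v xs - v y) / ‖y - xs‖ ^ ((n : ℝ) + 2 * s)) ≤
      ∫⁻ y : Eu n, ENNReal.ofReal ((v xs - v y) / ‖y - xs‖ ^ ((n : ℝ) + 2 * s))) ∧
    0 < ∫⁻ y in Metric.ball (0 : Eu n) 3 \ Metric.ball (0 : Eu n) 2,
        ENNReal.ofReal ((v xs - v y) / ‖y - xs‖ ^ ((n : ℝ) + 2 * s)) := by
  refine ⟨setLIntegral_le_lintegral _ _, ?_⟩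
  have : Nonempty (Fin n) := ⟨⟨0, hn⟩⟩
  refine setLIntegral_pos_of_ae_pos (measurableSet_ball.diff measurableSet_ball)
    (by fun_prop) (measure_ball_diff_ball_pos volume 0 (by norm_num) (by norm_num)) ?_
  filter_upwards [hzero] with y hy_zero hy
  have hy_ne : y ≠ xs := fun h => hy.2 (ball_subset_ball (by norm_num) (h ▸ hxs))
  rw [hy_zero hy, sub_zero, ENNReal.ofReal_pos]
  exact div_pos (by linarith) (Real.rpow_pos_of_pos (norm_pos_iff.2 (sub_ne_zero.2 hy_ne)) _)

/-- The key estimate for the counterexample to the SMP: if `v ∈ L¹_s` attains its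
(a.e.) maximum value `v(x*) ≥ 1` at `x* ∈ B_{1/2}` and vanishes a.e. on `B₃∖B₂`, then
`∫ (v − v(x*))|y − x*|^{−(n+2s)} dy ≤ ∫_{B₃∖B₂} (v − v(x*))|y − x*|^{−(n+2s)} dy < 0`.
Since the integrand is nonpositive a.e., this is expressed equivalently through the
nonnegative integrand `v(x*) − v`: the integral over `ℝⁿ` dominates the one over the
annulus, which is strictly positive. -/
theorem stmt19 (n : ℕ) (hn : 1 ≤ n) (s : ℝ) (hs : s ∈ Set.Ioo (0:ℝ) 1)
    (v : Eu n → ℝ) (hvmeas : Measurable v)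
    (hvL1 : MemL1s n s v)
    (xs : Eu n) (hxs : xs ∈ Metric.ball (0 : Eu n) (1/2))
    (hmax : ∀ᵐ y : Eu n, v y ≤ v xs) (hone : 1 ≤ v xs)
    (hzero : ∀ᵐ y : Eu n, y ∈ Metric.ball (0 : Eu n) 3 \ Metric.ball (0 : Eu n) 2 → v y = 0) :
    (∫⁻ y in Metric.ball (0 : Eu n) 3 \ Metric.ball (0 : Eu n) 2,
        ENNReal.ofReal ((v xs - v y) / ‖y - xs‖ ^ ((n : ℝ) + 2 * s)) ≤
      ∫⁻ y : Eu n, ENNReal.ofReal ((v xs - v y) / ‖y - xs‖ ^ ((n : ℝ) + 2 * s))) ∧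
    0 < ∫⁻ y in Metric.ball (0 : Eu n) 3 \ Metric.ball (0 : Eu n) 2,
        ENNReal.ofReal ((v xs - v y) / ‖y - xs‖ ^ ((n : ℝ) + 2 * s)) :=
  stmt19_general n hn s v hvmeas xs hxs hone hzero
end
end
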